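/- arXiv:0904.0841 — 8 statements merged into one kernel-verified Lean document; each statement's English description precedes it below -/
import Mathlib

section
/- For every integer m ≥ 1, d_{m-1}(m) = ((2m+1)/2) · d_m(m), where d_i(m) = 2^{-2m} · Σ_{k=i}^{m} 2^k · C(2m-2k, m-k) · C(m+k, k) · C(k, i). -/
noncomputable def d (m i : ℕ) : ℚ :=
  (2:ℚ)^(-(2*(m:ℤ))) * ∑ k ∈ Finset.Icc i m,
    (2:ℚ)^k * (Nat.choose (2*m-2*k) (m-k)) * (Nat.choose (m+k) k) * (Nat.choose k i)

lemma central_double (n : ℕ) :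
    Nat.choose (2*n+2) (n+1) = 2 * Nat.choose (2*n+1) n := by
  have h1 : (2*n+2) = (2*n+1) + 1 := by ring
  rw [h1, Nat.choose_succ_succ']
  have h2 : Nat.choose (2*n+1) (n+1) = Nat.choose (2*n+1) n := by
    rw [← Nat.choose_symm (by omega)]
    congr 1
    omega
  omega

theorem stmt1 (m : ℕ) (hm : 1 ≤ m) :
    d m (m-1) = ((2*(m:ℚ)+1)/2) * d m m := by
  obtain ⟨n, rfl⟩ : ∃ n, m = n + 1 := ⟨m - 1, (Nat.succ_pred_eq_of_pos hm).symm⟩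
  unfold d
  simp only [Nat.add_sub_cancel]
  rw [Finset.sum_Icc_succ_top (Nat.le_succ n)]
  simp only [Finset.Icc_self, Finset.sum_singleton]
  have e1 : n + 1 - 1 = n := rfl
  have e2 : 2*(n+1) - 2*n = 2 := by omega
  have e3 : (n+1) - n = 1 := by omega
  have e4 : 2*(n+1) - 2*(n+1) = 0 := by omega
  have e5 : (n+1) - (n+1) = 0 := by omega
  have e6 : (n+1) + (n+1) = 2*n+2 := by ring
  have e7 : (n+1) + n = 2*n+1 := by ring
  rw [e2, e3, e4, e5, e6, e7, central_double n]
  simp only [Nat.choose_self, Nat.choose_zero_right, Nat.choose_one_right,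
    Nat.choose_succ_self_right]
  push_cast
  ring
end

section
/- For every integer m ≥ 2, d_{m-2}(m) = 2^{-m-2} · ((m-1)(4m²+2m+1)/(2m-1)) · C(2m, m), where d_i(m) = 2^{-2m} · Σ_{k=i}^{m} 2^k · C(2m-2k, m-k) · C(m+k, k) · C(k, i). -/
theorem stmt3 (m : ℕ) (hm : 2 ≤ m) :
    d m (m-2) = (2:ℚ)^(-(m:ℤ)-2) * (((m:ℚ)-1)*(4*(m:ℚ)^2+2*m+1)/(2*(m:ℚ)-1))
      * Nat.choose (2*m) m := by
  obtain ⟨n, rfl⟩ : ∃ n, m = n + 2 := ⟨m - 2, by omega⟩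
  unfold d
  rw [show n + 2 - 2 = n from rfl]
  rw [show n + 2 = (n+1) + 1 from rfl, Finset.sum_Icc_succ_top (by omega),
    Finset.sum_Icc_succ_top (by omega), Finset.Icc_self, Finset.sum_singleton]
  rw [show 2*(n+1+1) - 2*n = 4 by omega, show n+1+1-n = 2 by omega,
    show 2*(n+1+1) - 2*(n+1) = 2 by omega, show n+1+1-(n+1) = 1 by omega,
    show 2*(n+1+1) - 2*(n+1+1) = 0 by omega, show n+1+1-(n+1+1) = 0 by omega,
    show n+1+1+n = 2*n+2 by omega, show (n+1+1)+(n+1) = 2*n+3 by omega,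
    show (n+1+1)+(n+1+1) = 2*n+4 by omega, show 2*(n+1+1) = 2*n+4 by omega]
  simp only [show n+1+1 = n+2 from rfl, Nat.choose_self, Nat.choose_succ_self_right,
    show Nat.choose 4 2 = 6 from rfl, show Nat.choose 0 0 = 1 from rfl]
  have r1 : (2*n+3) * Nat.choose (2*n+2) n = Nat.choose (2*n+3) (n+1) * (n+1) :=
    Nat.add_one_mul_choose_eq (2*n+2) n
  have r2 : (2*n+4) * Nat.choose (2*n+3) (n+1) = Nat.choose (2*n+4) (n+2) * (n+2) :=
    Nat.add_one_mul_choose_eq (2*n+3) (n+1)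
  have r3 : 2 * Nat.choose (n+2) n = (n+2)*(n+1) := by
    have h := Nat.choose_symm (show 2 ≤ n+2 by omega)
    rw [show n+2-2 = n by omega] at h
    have hd : 2 ∣ (n+2)*(n+1) := by
      rw [Nat.mul_comm]; exact (Nat.even_mul_succ_self (n+1)).two_dvd
    rw [h, Nat.choose_two_right, show n+2-1 = n+1 by omega, Nat.mul_div_cancel' hd]
  have q1 : (2*(n:ℚ)+3) * (Nat.choose (2*n+2) n : ℚ) = (Nat.choose (2*n+3) (n+1) : ℚ) * ((n:ℚ)+1) := by
    exact_mod_cast congrArg (Nat.cast : ℕ → ℚ) r1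
  have q2 : (2*(n:ℚ)+4) * (Nat.choose (2*n+3) (n+1) : ℚ) = (Nat.choose (2*n+4) (n+2) : ℚ) * ((n:ℚ)+2) := by
    exact_mod_cast congrArg (Nat.cast : ℕ → ℚ) r2
  have q3 : (Nat.choose (n+2) n : ℚ) = ((n:ℚ)+2)*((n:ℚ)+1)/2 := by
    rw [eq_div_iff (by norm_num : (2:ℚ) ≠ 0)]
    have : 2 * ((Nat.choose (n+2) n : ℚ)) = ((n:ℚ)+2)*((n:ℚ)+1) := by
      exact_mod_cast congrArg (Nat.cast : ℕ → ℚ) r3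
    linarith
  have hb : (Nat.choose (2*n+3) (n+1) : ℚ)
      = (2*(n:ℚ)+3) * (Nat.choose (2*n+2) n : ℚ) / ((n:ℚ)+1) := by
    rw [eq_div_iff (by positivity : ((n:ℚ)+1) ≠ 0)]; linarith
  have hc : (Nat.choose (2*n+4) (n+2) : ℚ)
      = (2*(n:ℚ)+4) * (Nat.choose (2*n+3) (n+1) : ℚ) / ((n:ℚ)+2) := by
    rw [eq_div_iff (by positivity : ((n:ℚ)+2) ≠ 0)]; linarith
  rw [show ((2:ℚ))^(-(2*(((n:ℕ)+2:ℕ):ℤ))) = ((2:ℚ)^(2*n+4))⁻¹ by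
      rw [show (-(2*(((n:ℕ)+2:ℕ):ℤ))) = -((2*n+4 : ℕ):ℤ) by push_cast; ring, zpow_neg, zpow_natCast],
    show ((2:ℚ))^(-(((n:ℕ)+2:ℕ):ℤ)-2) = ((2:ℚ)^(n+4))⁻¹ by
      rw [show (-(((n:ℕ)+2:ℕ):ℤ)-2) = -((n+4 : ℕ):ℤ) by push_cast; ring, zpow_neg, zpow_natCast]]
  rw [hc, hb, q3]
  push_cast
  have hP : ((2:ℚ))^n ≠ 0 := by positivity
  have hsplit : ((2:ℚ))^(2*n+4) = (2:ℚ)^(n+4) * (2:ℚ)^n := by rw [← pow_add]; ring_nf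
  rw [hsplit, pow_succ, pow_succ, pow_add]
  have h1 : ((n:ℚ)+1) ≠ 0 := by positivity
  have h2' : ((n:ℚ)+2) ≠ 0 := by positivity
  have h4 : (2*(n:ℚ)+3) ≠ 0 := by positivity
  have h5 : (2*((n:ℚ)+2)-1) ≠ 0 := by have : (0:ℚ) ≤ n := Nat.cast_nonneg n; nlinarith
  field_simp
  ring
end

section
/- For all integers m ≥ 2 and 2 ≤ i ≤ m, the Boros-Moll coefficients satisfy the recurrence i(i-1) d_i(m) = (i-1)(2m+1) d_{i-1}(m) − (m+2−i)(m+i−1) d_{i-2}(m). -/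
/-- central binomial step, cast to `ℚ`. -/
lemma castA (n : ℕ) :
    ((n:ℚ)+1) * (Nat.choose (2*(n+1)) (n+1)) = 2*(2*(n:ℚ)+1) * (Nat.choose (2*n) n) := by
  have h := Nat.succ_mul_centralBinom_succ n
  unfold Nat.centralBinom at h
  have := congrArg (fun x : ℕ => (x : ℚ)) h
  push_cast at this
  push_cast
  linarith [this]

lemma castB (m k : ℕ) :
    ((k:ℚ)+1) * (Nat.choose (m+k+1) (k+1)) = ((m:ℚ)+(k:ℚ)+1) * (Nat.choose (m+k) k) := by
  have h := Nat.add_one_mul_choose_eq (m+k) k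
  have := congrArg (fun x : ℕ => (x : ℚ)) h
  push_cast at this
  push_cast
  linarith [this]

lemma castC (k j : ℕ) :
    ((j:ℚ)+1) * (Nat.choose k (j+1)) = ((k:ℚ)-(j:ℚ)) * (Nat.choose k j) := by
  rcases le_or_gt j k with h | h
  · have hh := Nat.choose_succ_right_eq k j
    have := congrArg (fun x : ℕ => (x : ℚ)) hh
    push_cast [Nat.cast_sub h] at this
    linarith [this]
  · rw [Nat.choose_eq_zero_of_lt h, Nat.choose_eq_zero_of_lt (by omega)]
    ring

lemma castD (k j : ℕ) :
    (k:ℚ) * (Nat.choose (k-1) j) = ((k:ℚ)-(j:ℚ)) * (Nat.choose k j) := by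
  cases k with
  | zero =>
    cases j with
    | zero => simp
    | succ j => simp [Nat.choose_eq_zero_of_lt (Nat.succ_pos j)]
  | succ k =>
    rcases le_or_gt j (k+1) with h | h
    · have hh := Nat.choose_mul_succ_eq k j
      have := congrArg (fun x : ℕ => (x : ℚ)) hh
      push_cast [Nat.cast_sub h] at this
      push_cast
      linarith [this]
    · rw [Nat.choose_eq_zero_of_lt (by omega), Nat.choose_eq_zero_of_lt (by omega)]
      ring

/-- Abstract algebraic core of the telescoping step. -/
lemma key (n k j p q r s t a b c w : ℚ)
    (hA : (n+1)*p = 2*(2*n+1)*a)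
    (hB : (k+1)*q = (2*k+n+2)*b)
    (h1 : (j+1)*r = (k-j)*c)
    (h2 : (j+2)*s = (k-j-1)*r)
    (h3 : k*t = (k-j)*c) (hn : n+1 ≠ 0) (hk : k+1 ≠ 0) :
    w*p*b*((j+2)*(j+1)*s - (j+1)*(2*(k+n+1)+1)*r + ((k+n+1)-j)*((k+n+1)+j+1)*c)
      = 2*w*a*q*(k+1)*(2*n+1)*c - w*p*b*k*t*(2*n+3) := by
  have hmain : (n+1)*(k+1)*(w*p*b*((j+2)*(j+1)*s - (j+1)*(2*(k+n+1)+1)*r + ((k+n+1)-j)*((k+n+1)+j+1)*c))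
      = (n+1)*(k+1)*(2*w*a*q*(k+1)*(2*n+1)*c - w*p*b*k*t*(2*n+3)) := by
    linear_combination
      ((k+1)*w*b*((j+2)*(j+1)*s - (j+1)*(2*(k+n+1)+1)*r + ((k+n+1)-j)*((k+n+1)+j+1)*c)
        + (k+1)*w*b*k*t*(2*n+3)) * hA
      + (-2*w*a*(k+1)*(2*n+1)*(n+1)*c) * hB
      + (2*(2*n+1)*a*(k+1)*w*b*((k-j-1)-(2*(k+n+1)+1))) * h1
      + (2*(2*n+1)*a*(k+1)*w*b*(j+1)) * h2
      + (2*(2*n+1)*a*(k+1)*w*b*(2*n+3)) * h3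
  exact mul_left_cancel₀ (mul_ne_zero hn hk) hmain

/-- Abstract algebraic core of the last-term identity. -/
lemma key2 (m j r s t b c w : ℚ)
    (h1 : (j+1)*r = (m-j)*c)
    (h2 : (j+2)*s = (m-j-1)*r)
    (h3 : m*t = (m-j)*c) :
    w*b*((j+2)*(j+1)*s - (j+1)*(2*m+1)*r + (m-j)*(m+j+1)*c)
      = -(w*b*m*t) := by
  linear_combination (w*b*(j+1)) * h2 + (w*b*((m-j-1)-(2*m+1))) * h1 + (w*b) * h3

/-- The telescoping certificate. -/
noncomputable def Gc (m j k : ℕ) : ℚ :=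
  (2:ℚ)^k * (Nat.choose (2*(m-k)) (m-k)) * (Nat.choose (m+k) k) * (k:ℚ)
    * (Nat.choose (k-1) j) * (2*(m:ℚ)+1-2*((k:ℕ):ℚ))

theorem stmt5 (m i : ℕ) (hm : 2 ≤ m) (hi1 : 2 ≤ i) (hi2 : i ≤ m) :
    (i:ℚ)*((i:ℚ)-1) * d m i
      = ((i:ℚ)-1)*(2*(m:ℚ)+1) * d m (i-1)
        - ((m:ℚ)+2-(i:ℚ))*((m:ℚ)+(i:ℚ)-1) * d m (i-2) := by
  obtain ⟨j, rfl⟩ : ∃ j, i = j + 2 := ⟨i-2, by omega⟩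
  have e1 : j+2-1 = j+1 := by omega
  have e2 : j+2-2 = j := by omega
  rw [e1, e2]
  push_cast
  have hd : ∀ l : ℕ, d m l = (2:ℚ)^(-(2*(m:ℤ))) * ∑ k ∈ Finset.range (m+1),
      (2:ℚ)^k * (Nat.choose (2*m-2*k) (m-k)) * (Nat.choose (m+k) k) * (Nat.choose k l) := by
    intro l
    simp only [d]
    congr 1
    refine Finset.sum_subset ?_ ?_
    · intro x hx
      simp only [Finset.mem_Icc, Finset.mem_range] at *
      omega
    · intro x hx hx2
      simp only [Finset.mem_Icc, Finset.mem_range] at hx hx2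
      have hxl : x < l := by omega
      rw [Nat.choose_eq_zero_of_lt hxl]
      ring
  have hGstep : ∀ k ∈ Finset.range m,
      (((j:ℚ)+2)*((j:ℚ)+1) * ((2:ℚ)^k * (Nat.choose (2*m-2*k) (m-k)) * (Nat.choose (m+k) k) * (Nat.choose k (j+2)))
       - ((j:ℚ)+1)*(2*(m:ℚ)+1) * ((2:ℚ)^k * (Nat.choose (2*m-2*k) (m-k)) * (Nat.choose (m+k) k) * (Nat.choose k (j+1)))
       + ((m:ℚ)-(j:ℚ))*((m:ℚ)+(j:ℚ)+1) * ((2:ℚ)^k * (Nat.choose (2*m-2*k) (m-k)) * (Nat.choose (m+k) k) * (Nat.choose k j)))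
      = Gc m j (k+1) - Gc m j k := by
    intro k hk
    simp only [Finset.mem_range] at hk
    obtain ⟨n, hn⟩ : ∃ n, m = k + n + 1 := ⟨m-k-1, by omega⟩
    have hmc : (m:ℚ) = (k:ℚ)+(n:ℚ)+1 := by exact_mod_cast congrArg (fun x : ℕ => (x:ℚ)) hn
    have ea : 2*m-2*k = 2*(n+1) := by omega
    have eb : m-k = n+1 := by omega
    have ed : m-(k+1) = n := by omega
    have ee : m+(k+1) = m+k+1 := by omega
    have ef : k+1-1 = k := by omega
    have hA := castA n
    have hB' : ((k:ℚ)+1) * (Nat.choose (m+k+1) (k+1))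
        = (2*(k:ℚ)+(n:ℚ)+2) * (Nat.choose (m+k) k) := by
      have h := castB m k
      rw [hmc] at h
      linear_combination h
    have h1 := castC k j
    have h2' : ((j:ℚ)+2) * (Nat.choose k (j+2))
        = ((k:ℚ)-(j:ℚ)-1) * (Nat.choose k (j+1)) := by
      have h := castC k (j+1)
      rw [show j+1+1 = j+2 by omega] at h
      push_cast at h
      linear_combination h
    have h3 := castD k j
    have hn0 : (n:ℚ)+1 ≠ 0 := by positivity
    have hk0 : (k:ℚ)+1 ≠ 0 := by positivity
    have H := key (n:ℚ) (k:ℚ) (j:ℚ) (Nat.choose (2*(n+1)) (n+1)) (Nat.choose (m+k+1) (k+1))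
      (Nat.choose k (j+1)) (Nat.choose k (j+2)) (Nat.choose (k-1) j) (Nat.choose (2*n) n)
      (Nat.choose (m+k) k) (Nat.choose k j) ((2:ℚ)^k) hA hB' h1 h2' h3 hn0 hk0
    simp only [Gc]
    rw [ea, eb, ed, ee, ef]
    push_cast
    rw [hmc]
    linear_combination H
  have hlast :
      (((j:ℚ)+2)*((j:ℚ)+1) * ((2:ℚ)^m * (Nat.choose (2*m-2*m) (m-m)) * (Nat.choose (m+m) m) * (Nat.choose m (j+2)))
       - ((j:ℚ)+1)*(2*(m:ℚ)+1) * ((2:ℚ)^m * (Nat.choose (2*m-2*m) (m-m)) * (Nat.choose (m+m) m) * (Nat.choose m (j+1)))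
       + ((m:ℚ)-(j:ℚ))*((m:ℚ)+(j:ℚ)+1) * ((2:ℚ)^m * (Nat.choose (2*m-2*m) (m-m)) * (Nat.choose (m+m) m) * (Nat.choose m j)))
      = -(Gc m j m) := by
    have em1 : 2*m-2*m = 0 := by omega
    have em2 : m-m = 0 := by omega
    have h1 := castC m j
    have h2' : ((j:ℚ)+2) * (Nat.choose m (j+2))
        = ((m:ℚ)-(j:ℚ)-1) * (Nat.choose m (j+1)) := by
      have h := castC m (j+1)
      rw [show j+1+1 = j+2 by omega] at h
      push_cast at h
      linear_combination h
    have h3 := castD m j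
    have H := key2 (m:ℚ) (j:ℚ) (Nat.choose m (j+1)) (Nat.choose m (j+2)) (Nat.choose (m-1) j)
      (Nat.choose (m+m) m) (Nat.choose m j) ((2:ℚ)^m) h1 h2' h3
    simp only [Gc]
    rw [em1, em2]
    simp only [Nat.mul_zero, Nat.choose_self, Nat.cast_one]
    push_cast
    linear_combination H
  have hsum : ∑ k ∈ Finset.range (m+1),
      (((j:ℚ)+2)*((j:ℚ)+1) * ((2:ℚ)^k * (Nat.choose (2*m-2*k) (m-k)) * (Nat.choose (m+k) k) * (Nat.choose k (j+2)))
       - ((j:ℚ)+1)*(2*(m:ℚ)+1) * ((2:ℚ)^k * (Nat.choose (2*m-2*k) (m-k)) * (Nat.choose (m+k) k) * (Nat.choose k (j+1)))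
       + ((m:ℚ)-(j:ℚ))*((m:ℚ)+(j:ℚ)+1) * ((2:ℚ)^k * (Nat.choose (2*m-2*k) (m-k)) * (Nat.choose (m+k) k) * (Nat.choose k j))) = 0 := by
    rw [Finset.sum_range_succ, Finset.sum_congr rfl hGstep, Finset.sum_range_sub (Gc m j), hlast]
    have h0 : Gc m j 0 = 0 := by simp [Gc]
    rw [h0]
    ring
  rw [hd (j+2), hd (j+1), hd j]
  rw [Finset.sum_add_distrib, Finset.sum_sub_distrib, ← Finset.mul_sum, ← Finset.mul_sum,
    ← Finset.mul_sum] at hsum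
  linear_combination (2:ℚ)^(-(2*(m:ℤ))) * hsum
end

section
/- For all integers m ≥ 2 and 1 ≤ i ≤ m, if d_i(m) satisfy the recurrence i(i-1) d_i(m) = (i-1)(2m+1) d_{i-1}(m) − (m+2−i)(m+i−1) d_{i-2}(m) (with d_j(m)=0 for j<0 or j>m), then (m+i)(m+1−i) d_{i-1}(m)² + i(i+1) d_i(m)² − i(2m+1) d_{i-1}(m) d_i(m) = i(i+1)(d_i(m)² − d_{i+1}(m) d_{i-1}(m)). -/
theorem stmt6 (m : ℤ) (hm : 2 ≤ m) (d : ℤ → ℚ)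
    (hzero : ∀ i : ℤ, i < 0 ∨ m < i → d i = 0)
    (hrec : ∀ i : ℤ, 1 ≤ i → i ≤ m + 1 →
      (i:ℚ)*((i:ℚ)-1) * d i
        = ((i:ℚ)-1)*(2*(m:ℚ)+1) * d (i-1)
          - ((m:ℚ)+2-(i:ℚ))*((m:ℚ)+(i:ℚ)-1) * d (i-2)) :
    ∀ i : ℤ, 1 ≤ i → i ≤ m →
      ((m:ℚ)+(i:ℚ))*((m:ℚ)+1-(i:ℚ)) * (d (i-1))^2
        + (i:ℚ)*((i:ℚ)+1) * (d i)^2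
        - (i:ℚ)*(2*(m:ℚ)+1) * d (i-1) * d i
      = (i:ℚ)*((i:ℚ)+1) * ((d i)^2 - d (i+1) * d (i-1)) := by
  intro i h1 h2
  have h := hrec (i+1) (by linarith) (by linarith)
  rw [show i+1-1 = i from by ring, show i+1-2 = i-1 from by ring] at h
  push_cast at h
  linear_combination d (i-1) * h
end

section
/- For every integer m ≥ 2 and every 1 ≤ i ≤ m−1, the Boros-Moll coefficients satisfy i · d_i(m)² > (i+1) · d_{i+1}(m) · d_{i-1}(m); equivalently, the sequence {i! · d_i(m)} is log-concave. -/
open Polynomial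

noncomputable def bmCoeff (m k : ℕ) : ℚ := 2 ^ k * (m - k).centralBinom * (m + k).choose k

noncomputable def bmPoly (m : ℕ) : ℚ[X] :=
  ∑ k ∈ Finset.range (m + 1), C (bmCoeff m k) * X ^ k

lemma coeff_bmPoly (m n : ℕ) : (bmPoly m).coeff n = if n ≤ m then bmCoeff m n else 0 := by
  simp [bmPoly, finsetSum_coeff]

lemma succ_mul_centralBinom_succ_rat (n : ℕ) :
    ((n : ℚ) + 1) * (n + 1).centralBinom = 2 * (2 * n + 1) * n.centralBinom := by
  exact_mod_cast Nat.succ_mul_centralBinom_succ n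

lemma bmCoeff_succ_zero (m : ℕ) :
    ((m : ℚ) + 1) * bmCoeff (m + 1) 0 = 2 * (2 * m + 1) * bmCoeff m 0 := by
  simp [bmCoeff, succ_mul_centralBinom_succ_rat]

lemma bmCoeff_succ_self (m : ℕ) :
    ((m : ℚ) + 1) * bmCoeff (m + 1) (m + 1) = 4 * (2 * m + 1) * bmCoeff m m := by
  simp only [bmCoeff, Nat.sub_self, Nat.centralBinom_zero, Nat.cast_one, mul_one]
  rw [show m + 1 + (m + 1) = 2 * (m + 1) by ring, show m + m = 2 * m by ring,
    ← Nat.centralBinom_eq_two_mul_choose, ← Nat.centralBinom_eq_two_mul_choose, pow_succ]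
  linear_combination 2 ^ m * 2 * succ_mul_centralBinom_succ_rat m

lemma bmCoeff_succ_succ {m k : ℕ} (hk : k < m) :
    ((m : ℚ) + 1) * bmCoeff (m + 1) (k + 1)
      = 2 * (2 * m - 2 * k - 1) * bmCoeff m (k + 1) + 4 * (m + k + 1) * bmCoeff m k := by
  obtain ⟨n, rfl⟩ : ∃ n, m = n + k + 1 := ⟨m - k - 1, by omega⟩
  simp only [bmCoeff, show n + k + 1 + 1 - (k + 1) = n + 1 by omega,
    show n + k + 1 - (k + 1) = n by omega, show n + k + 1 - k = n + 1 by omega,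
    show n + k + 1 + 1 + (k + 1) = n + 2 * k + 3 by omega,
    show n + k + 1 + (k + 1) = n + 2 * k + 2 by omega,
    show n + k + 1 + k = n + 2 * k + 1 by omega]
  have ha : ((n + 2 * k + 1).choose k : ℚ) * (n + 2 * k + 2)
      = (n + 2 * k + 2).choose (k + 1) * (k + 1) := by
    have := Nat.add_one_mul_choose_eq (n + 2 * k + 1) k
    rw [mul_comm] at this
    exact_mod_cast this
  have he : ((n + 2 * k + 3).choose (k + 1) : ℚ) * (n + k + 2)
      = (n + 2 * k + 2).choose (k + 1) * (n + 2 * k + 3) := by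
    have := Nat.choose_mul_succ_eq (n + 2 * k + 2) (k + 1)
    rw [show n + 2 * k + 2 + 1 - (k + 1) = n + k + 2 by omega] at this
    exact_mod_cast this.symm
  have hc := succ_mul_centralBinom_succ_rat n
  push_cast
  linear_combination 2 ^ (k + 1) * ((n + 1).centralBinom : ℚ) * he
    - 2 ^ (k + 2) * ((n + 1).centralBinom : ℚ) * ha
    + 2 ^ (k + 1) * ((n + 2 * k + 2).choose (k + 1) : ℚ) * hc

section EulerOperator

variable {R : Type*} [CommSemiring R]

lemma coeff_X_mul_derivative (p : R[X]) (n : ℕ) :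
    (X * derivative p).coeff n = n * p.coeff n := by
  cases n <;> simp [coeff_X_mul, coeff_derivative, mul_comm]

lemma coeff_zero_linear_mul_add_linear_mul_X_derivative (a b c e : R) (p : R[X]) :
    ((C a + C b * X) * p + (C c * X + C e) * (X * derivative p)).coeff 0 = a * p.coeff 0 := by
  simp [mul_coeff_zero]

lemma coeff_succ_linear_mul_add_linear_mul_X_derivative (a b c e : R) (p : R[X]) (n : ℕ) :
    ((C a + C b * X) * p + (C c * X + C e) * (X * derivative p)).coeff (n + 1)
      = (a + e * (n + 1)) * p.coeff (n + 1) + (b + c * n) * p.coeff n := by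
  simp only [add_mul, coeff_add, coeff_C_mul, mul_assoc, coeff_X_mul, coeff_X_mul_derivative,
    coeff_derivative]
  ring

end EulerOperator

lemma bmPoly_succ (m : ℕ) :
    C ((m : ℚ) + 1) * bmPoly (m + 1)
      = (C (2 * (2 * m + 1) : ℚ) + C (4 * (m + 1) : ℚ) * X) * bmPoly m
        + (C 4 * X + C (-4)) * (X * derivative (bmPoly m)) := by
  ext n
  rcases n with _ | k
  · rw [coeff_C_mul, coeff_zero_linear_mul_add_linear_mul_X_derivative]
    simp [coeff_bmPoly, bmCoeff_succ_zero]
  · rw [coeff_C_mul, coeff_succ_linear_mul_add_linear_mul_X_derivative]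
    simp only [coeff_bmPoly]
    rcases lt_trichotomy k m with hk | rfl | hk
    · have hk' : k + 1 ≤ m := hk
      simp only [hk.le, hk', hk'.trans m.le_succ, if_true]
      linear_combination bmCoeff_succ_succ hk
    · simp
      linear_combination bmCoeff_succ_self k
    · simp [hk.not_ge, lt_asymm hk]

lemma bmPoly_comp_succ (m : ℕ) :
    C ((m : ℚ) + 1) * (bmPoly (m + 1)).comp (X + 1)
      = (C (2 * (4 * m + 3) : ℚ) + C (4 * (m + 1) : ℚ) * X) * (bmPoly m).comp (X + 1)
        + (C 4 * X + C 4) * (X * derivative ((bmPoly m).comp (X + 1))) := by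
  have h := congrArg (fun p => p.comp (X + 1)) (bmPoly_succ m)
  simp only [mul_comp, add_comp, C_comp, X_comp] at h
  rw [derivative_comp, derivative_add, derivative_X, derivative_one, add_zero, one_mul]
  simp only [map_add, map_mul, map_natCast, map_ofNat, map_one, map_neg] at h ⊢
  linear_combination h

lemma d_eq_coeff (m i : ℕ) :
    d m i = 2 ^ (-(2 * (m : ℤ))) * ((bmPoly m).comp (X + 1)).coeff i := by
  simp only [d, bmPoly, sum_comp, mul_comp, C_comp, X_pow_comp, finsetSum_coeff, coeff_C_mul,
    coeff_X_add_one_pow]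
  congr 1
  refine Finset.sum_subset_zero_on_sdiff (fun k hk => ?_) (fun k hk => ?_) (fun k _ => ?_)
  · simp only [Finset.mem_Icc, Finset.mem_range] at hk ⊢; omega
  · simp only [Finset.mem_sdiff, Finset.mem_Icc, Finset.mem_range] at hk
    rw [Nat.choose_eq_zero_of_lt (by omega), Nat.cast_zero, mul_zero]
  · rw [bmCoeff, Nat.centralBinom_eq_two_mul_choose, Nat.mul_sub]

lemma two_zpow_neg_two_mul_succ (m : ℕ) :
    (2 : ℚ) ^ (-(2 * ((m + 1 : ℕ) : ℤ))) = 2 ^ (-(2 * (m : ℤ))) / 4 := by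
  rw [show -(2 * ((m + 1 : ℕ) : ℤ)) = -(2 * (m : ℤ)) - 2 by push_cast; ring,
    zpow_sub₀ two_ne_zero]
  norm_num

lemma d_succ_zero (m : ℕ) : 2 * ((m : ℚ) + 1) * d (m + 1) 0 = (4 * m + 3) * d m 0 := by
  have h := congrArg (coeff · 0) (bmPoly_comp_succ m)
  simp only [coeff_C_mul, coeff_zero_linear_mul_add_linear_mul_X_derivative] at h
  rw [d_eq_coeff, d_eq_coeff, two_zpow_neg_two_mul_succ]
  linear_combination (2 : ℚ) ^ (-(2 * (m : ℤ))) / 2 * h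

lemma d_succ_succ (m i : ℕ) :
    2 * ((m : ℚ) + 1) * d (m + 1) (i + 1)
      = (4 * m + 2 * i + 5) * d m (i + 1) + 2 * (m + i + 1) * d m i := by
  have h := congrArg (coeff · (i + 1)) (bmPoly_comp_succ m)
  simp only [coeff_C_mul, coeff_succ_linear_mul_add_linear_mul_X_derivative] at h
  rw [d_eq_coeff, d_eq_coeff, d_eq_coeff, two_zpow_neg_two_mul_succ]
  linear_combination (2 : ℚ) ^ (-(2 * (m : ℤ))) / 2 * h

lemma d_pos {m i : ℕ} (h : i ≤ m) : 0 < d m i := by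
  refine mul_pos (by positivity) (Finset.sum_pos (fun k hk => ?_) ⟨i, by simp [h]⟩)
  simp only [Finset.mem_Icc] at hk
  have := Nat.choose_pos (show m - k ≤ 2 * m - 2 * k by omega)
  have := Nat.choose_pos (show k ≤ m + k by omega)
  have := Nat.choose_pos hk.1
  positivity

lemma d_eq_zero {m i : ℕ} (h : m < i) : d m i = 0 := by
  rw [d, Finset.Icc_eq_empty (by omega), Finset.sum_empty, mul_zero]

noncomputable def dFact (m i : ℕ) : ℚ := i.factorial * d m i

lemma dFact_pos {m i : ℕ} (h : i ≤ m) : 0 < dFact m i :=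
  mul_pos (by positivity) (d_pos h)

lemma dFact_eq_zero {m i : ℕ} (h : m < i) : dFact m i = 0 := by
  rw [dFact, d_eq_zero h, mul_zero]

lemma dFact_nonneg (m i : ℕ) : 0 ≤ dFact m i :=
  (le_or_gt i m).elim (fun h => (dFact_pos h).le) fun h => (dFact_eq_zero h).ge

lemma dFact_succ_succ (m i : ℕ) :
    2 * ((m : ℚ) + 1) * dFact (m + 1) (i + 1)
      = (4 * m + 2 * i + 5) * dFact m (i + 1) + 2 * (i + 1) * (m + i + 1) * dFact m i := by
  simp only [dFact, Nat.factorial_succ]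
  push_cast
  linear_combination ((i : ℚ) + 1) * i.factorial * d_succ_succ m i

section LogConcavity

variable {K : Type*} [Field K] [LinearOrder K] [IsStrictOrderedRing K]

lemma mul_le_mul_of_log_concave {p q r s : K} (hp : 0 ≤ p) (hq : 0 < q) (hr : 0 ≤ r)
    (hqr : s * q ≤ r ^ 2) (hpq : r * p ≤ q ^ 2) : s * p ≤ r * q := by
  rcases hr.eq_or_lt with rfl | hr
  · nlinarith
  · have : s * p * (r * q) ≤ r * q * (r * q) := by
      nlinarith [mul_le_mul hqr hpq (by positivity) (by positivity)]
    exact le_of_mul_le_mul_right this (by positivity)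

lemma log_concave_step {M J p q r s q' r' s' : K} (hM : 0 ≤ M) (hJ : 0 ≤ J) (hq : 0 < q)
    (hqr : s * q ≤ r ^ 2) (hpq : r * p ≤ q ^ 2) (hpr : s * p ≤ r * q)
    (hq' : q' = (4 * M + 2 * J + 3) * q + 2 * J * (M + J) * p)
    (hr' : r' = (4 * M + 2 * J + 5) * r + 2 * (J + 1) * (M + J + 1) * q)
    (hs' : s' = (4 * M + 2 * J + 7) * s + 2 * (J + 2) * (M + J + 2) * r) :
    s' * q' < r' ^ 2 := by
  subst hq' hr' hs'
  have hB : 0 ≤ 2 * J * (M + J) := by positivity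
  have c1 : 0 ≤ (4 * M + 2 * J + 7) * (4 * M + 2 * J + 3) * (r ^ 2 - s * q) :=
    mul_nonneg (by positivity) (by linarith)
  have c2 : 0 ≤ (4 * M + 2 * J + 7) * (2 * J * (M + J)) * (r * q - s * p) :=
    mul_nonneg (by positivity) (by linarith)
  have c3 : 0 ≤ 2 * (J + 2) * (M + J + 2) * (2 * J * (M + J)) * (q ^ 2 - r * p) :=
    mul_nonneg (by positivity) (by linarith)
  have c4 : 0 ≤ (2 * r - (2 * M - 2 * J + 1) * q) ^ 2 := sq_nonneg _
  have c5 : 0 ≤ 4 * (J * q) ^ 2 := by positivity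
  have c6 : 0 ≤ 16 * (M * J) * q ^ 2 := by positivity
  have c7 : 0 ≤ 4 * M * q ^ 2 := by positivity
  have c8 : 0 ≤ 20 * J * q ^ 2 := by positivity
  have c9 : 0 < 3 * q ^ 2 := by positivity
  linarith

end LogConcavity

lemma dFact_mul_lt_sq {m j : ℕ} (hj : j + 1 < m) :
    dFact m (j + 2) * dFact m j < dFact m (j + 1) ^ 2 := by
  induction m generalizing j with
  | zero => omega
  | succ m ih =>
    have hlc : ∀ j, dFact m (j + 2) * dFact m j ≤ dFact m (j + 1) ^ 2 := fun j =>
      (lt_or_ge (j + 1) m).elim (fun h => (ih h).le) fun h => by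
        rw [dFact_eq_zero (by omega : m < j + 2), zero_mul]; positivity
    have hq : 0 < dFact m j := dFact_pos (by omega)
    -- `p` stands for the term of index `j - 1`, which is absent (and taken to be `0`) when `j = 0`
    obtain ⟨p, hrec, hpq, hpr⟩ : ∃ p,
        2 * ((m : ℚ) + 1) * dFact (m + 1) j
          = (4 * m + 2 * j + 3) * dFact m j + 2 * j * (m + j) * p ∧
        dFact m (j + 1) * p ≤ dFact m j ^ 2 ∧
        dFact m (j + 2) * p ≤ dFact m (j + 1) * dFact m j := by
      rcases j with _ | j
      · refine ⟨0, ?_, by simp [sq_nonneg], by simp [mul_nonneg (dFact_nonneg m 1) hq.le]⟩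
        simpa [dFact] using d_succ_zero m
      · refine ⟨dFact m j, ?_, hlc j, ?_⟩
        · push_cast; linear_combination dFact_succ_succ m j
        · exact mul_le_mul_of_log_concave (dFact_nonneg m j) hq (dFact_nonneg m _) (hlc (j + 1))
            (hlc j)
    have key := log_concave_step (s' := 2 * ((m : ℚ) + 1) * dFact (m + 1) (j + 2))
      (Nat.cast_nonneg m) (Nat.cast_nonneg j) hq (hlc j) hpq hpr hrec (dFact_succ_succ m j)
      (by linear_combination (norm := (push_cast; ring)) dFact_succ_succ m (j + 1))
    rw [mul_mul_mul_comm, mul_pow, ← pow_two] at key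
    exact lt_of_mul_lt_mul_left key (by positivity)

theorem stmt7_general (m i : ℕ) (hi1 : 1 ≤ i) (hi2 : i ≤ m - 1) :
    (i:ℚ) * (d m i)^2 > ((i:ℚ)+1) * d m (i+1) * d m (i-1) := by
  obtain ⟨j, rfl⟩ : ∃ j, i = j + 1 := ⟨i - 1, by omega⟩
  have h := dFact_mul_lt_sq (m := m) (j := j) (by omega)
  simp only [dFact, Nat.factorial_succ, Nat.add_sub_cancel] at h ⊢
  push_cast at h ⊢
  have hpos : (0 : ℚ) < (j + 1) * j.factorial ^ 2 := by positivity
  refine lt_of_mul_lt_mul_left ?_ hpos.le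
  linear_combination h

theorem stmt7 (m i : ℕ) (hm : 2 ≤ m) (hi1 : 1 ≤ i) (hi2 : i ≤ m - 1) :
    (i:ℚ) * (d m i)^2 > ((i:ℚ)+1) * d m (i+1) * d m (i-1) :=
  stmt7_general m i hi1 hi2
end

section
/- For every integer m ≥ 2, the Boros-Moll coefficients satisfy d_m(m) < d_0(m), i.e., 2^{-m} C(2m,m) < 2^{-2m} Σ_{k=0}^m 2^k C(2m-2k, m-k) C(m+k, k). -/
theorem stmt9 (m : ℕ) (hm : 2 ≤ m) : d m m < d m 0 := by
  unfold d
  apply mul_lt_mul_of_pos_left _ (by positivity)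
  rw [Finset.Icc_self, Finset.sum_singleton]
  have h := Finset.single_lt_sum (f := fun k : ℕ =>
      (2:ℚ)^k * (Nat.choose (2*m-2*k) (m-k)) * (Nat.choose (m+k) k) * (Nat.choose k 0))
    (i := m) (j := 0) (s := Finset.Icc 0 m)
    (by omega) (by simp) (by simp)
    (by
      simp only [pow_zero, Nat.choose_zero_right, Nat.cast_one, mul_one, one_mul,
        Nat.mul_zero, Nat.sub_zero, Nat.add_zero, Nat.choose_self]
      exact_mod_cast Nat.choose_pos (by omega))
    (fun k _ _ => by positivity)
  simpa using h
end

section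
/- For every integer m ≥ 2, m(m−1)(d_{m-1}(m)² − d_m(m) d_{m-2}(m)) = (m(4m²+6m−1)/(4(2m−1))) · m(m−1) · 2^{-2m} · C(2m,m)², and this quantity strictly exceeds m(m+1) · 2^{-2m} · C(2m,m)² = m(m+1) d_m(m)². -/
/-!
For `i = m, m - 1, m - 2` the sum defining `d m i` has one, two and three terms, and
`C(2m-1, m-1) = C(2m, m) / 2`, `C(2m-2, m-2) = (m-1) C(2m, m) / (2(2m-1))` make `d m m`,
`d m (m-1)`, `d m (m-2)` explicit rational multiples of `C(2m, m) / 2^m`. The identity is then one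
of rational functions of `m`, and with `m = t + 2` the inequality becomes
`4t⁴ + 34t³ + 93t² + 89t + 18 > 0`.
-/

open Finset Nat

lemma centralBinom_succ_eq_two_mul_choose (n : ℕ) :
    centralBinom (n + 1) = 2 * (2 * n + 1).choose n := by
  rw [centralBinom_eq_two_mul_choose, mul_add_one, choose_succ_succ', choose_symm_half]
  ring

lemma cast_choose_two_mul_add_one (n : ℕ) :
    ((2 * n + 1).choose n : ℚ) = centralBinom (n + 1) / 2 := by
  rw [centralBinom_succ_eq_two_mul_choose]
  push_cast
  ring

lemma cast_choose_two_mul_add_two (n : ℕ) :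
    ((2 * n + 2).choose n : ℚ) = (n + 1) * centralBinom (n + 2) / (2 * (2 * n + 3)) := by
  have h₁ : ((2 * n + 2).choose n : ℚ) * (n + 2) = centralBinom (n + 1) * (n + 1) := by
    have := choose_succ_right_eq (2 * n + 2) n
    rw [show 2 * n + 2 - n = n + 2 by omega, ← mul_add_one, ← centralBinom_eq_two_mul_choose] at this
    exact_mod_cast this.symm
  have h₂ : ((n + 2) * centralBinom (n + 2) : ℚ) = 2 * (2 * n + 3) * centralBinom (n + 1) := by
    exact_mod_cast succ_mul_centralBinom_succ (n + 1)
  rw [eq_div_iff (by positivity)]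
  apply mul_right_cancel₀ (show (n + 2 : ℚ) ≠ 0 by positivity)
  linear_combination (2 * (2 * n + 3)) * h₁ - (n + 1) * h₂

lemma d_eq_sum_div (m i : ℕ) : d m i = (∑ k ∈ Icc i m,
    (2:ℚ)^k * (Nat.choose (2*m-2*k) (m-k)) * (Nat.choose (m+k) k) * (Nat.choose k i)) / 2 ^ (2 * m) := by
  rw [d, zpow_neg, ← inv_mul_eq_div]
  norm_cast

lemma d_self (m : ℕ) : d m m = (2 * m).choose m / 2 ^ m := by
  rw [d_eq_sum_div, Icc_self, sum_singleton, two_mul m, pow_add]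
  simp only [Nat.sub_self, choose_self, Nat.cast_one, mul_one]
  field_simp

lemma d_sub_one {m : ℕ} (hm : 1 ≤ m) : d m (m - 1) = (2 * m + 1) * (2 * m).choose m / 2 ^ (m + 1) := by
  obtain ⟨n, rfl⟩ : ∃ n, m = n + 1 := ⟨m - 1, by omega⟩
  rw [add_tsub_cancel_right, d_eq_sum_div, sum_Icc_succ_top (by omega), Icc_self, sum_singleton]
  simp only [← Nat.mul_sub, add_tsub_cancel_left, tsub_self, mul_one, choose_self,
    choose_succ_self_right, ← two_mul, show n + 1 + n = 2 * n + 1 by ring]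
  push_cast
  rw [cast_choose_two_mul_add_one, centralBinom_eq_two_mul_choose]
  field_simp
  ring

lemma d_sub_two {m : ℕ} (hm : 2 ≤ m) :
    d m (m - 2) = (m - 1) * (4 * m ^ 2 + 2 * m + 1) / (2 * m - 1) * (2 * m).choose m / 2 ^ (m + 2) := by
  obtain ⟨n, rfl⟩ : ∃ n, m = n + 2 := ⟨m - 2, by omega⟩
  rw [add_tsub_cancel_right, d_eq_sum_div, sum_Icc_succ_top (by omega), sum_Icc_succ_top (by omega), Icc_self,
    sum_singleton]
  have h : ((n + 2).choose n : ℚ) = (n + 2) * (n + 1) / 2 := by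
    rw [choose_symm_add, cast_choose_two]
    push_cast
    ring
  simp only [← Nat.mul_sub, add_tsub_cancel_left, tsub_self, add_tsub_add_eq_tsub_left, mul_one, choose_self,
    choose_succ_self_right, ← two_mul, show n + 2 + n = 2 * n + 2 by ring,
    show n + 2 + (n + 1) = 2 * (n + 1) + 1 by ring, show n + 1 + 1 = n + 2 from rfl]
  push_cast
  rw [cast_choose_two_mul_add_one, cast_choose_two_mul_add_two, h, centralBinom_eq_two_mul_choose,
    show Nat.choose 4 2 = 6 by decide, show 2 * ((n : ℚ) + 2) - 1 = 2 * n + 3 by ring]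
  field_simp
  ring

lemma two_zpow_neg_two_mul (m : ℕ) : (2 : ℚ) ^ (-(2 * (m : ℤ))) = 1 / (2 ^ m) ^ 2 := by
  rw [zpow_neg, ← pow_mul, one_div]
  norm_cast
  ring_nf

lemma d_sub_one_sq_sub_d_self_mul_d_sub_two {m : ℕ} (hm : 2 ≤ m) :
    d m (m - 1) ^ 2 - d m m * d m (m - 2)
      = m * (4 * m ^ 2 + 6 * m - 1) / (4 * (2 * m - 1)) * (2 : ℚ) ^ (-(2 * (m : ℤ)))
        * (2 * m).choose m ^ 2 := by
  have h : (2 * m - 1 : ℚ) ≠ 0 := by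
    have : (2 : ℚ) ≤ m := by exact_mod_cast hm
    exact ne_of_gt (by linarith)
  rw [d_self, d_sub_one (by omega), d_sub_two hm, two_zpow_neg_two_mul]
  field_simp
  ring

lemma mul_add_one_lt_of_two_le {K : Type*} [Field K] [LinearOrder K] [IsStrictOrderedRing K]
    {x : K} (hx : 2 ≤ x) :
    x * (x + 1) < x * (4 * x ^ 2 + 6 * x - 1) / (4 * (2 * x - 1)) * (x * (x - 1)) := by
  rw [div_mul_eq_mul_div, lt_div_iff₀ (by linarith)]
  obtain ⟨t, ht, rfl⟩ : ∃ t : K, 0 ≤ t ∧ x = t + 2 := ⟨x - 2, by linarith, by ring⟩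
  nlinarith [pow_nonneg ht 2, pow_nonneg ht 3, pow_nonneg ht 4]

theorem stmt13 (m : ℕ) (hm : 2 ≤ m) :
    (m:ℚ)*((m:ℚ)-1) * ((d m (m-1))^2 - d m m * d m (m-2))
      = ((m:ℚ)*(4*(m:ℚ)^2+6*(m:ℚ)-1)/(4*(2*(m:ℚ)-1)))
        * ((m:ℚ)*((m:ℚ)-1)) * (2:ℚ)^(-(2*(m:ℤ))) * (Nat.choose (2*m) m : ℚ)^2
    ∧ (m:ℚ)*((m:ℚ)-1) * ((d m (m-1))^2 - d m m * d m (m-2))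
        > (m:ℚ)*((m:ℚ)+1) * (2:ℚ)^(-(2*(m:ℤ))) * (Nat.choose (2*m) m : ℚ)^2
    ∧ (m:ℚ)*((m:ℚ)+1) * (2:ℚ)^(-(2*(m:ℤ))) * (Nat.choose (2*m) m : ℚ)^2
        = (m:ℚ)*((m:ℚ)+1) * (d m m)^2 := by
  rw [d_sub_one_sq_sub_d_self_mul_d_sub_two hm, d_self, two_zpow_neg_two_mul]
  have hpos : (0 : ℚ) < 1 / (2 ^ m) ^ 2 * (Nat.choose (2*m) m : ℚ)^2 := by
    have := Nat.choose_pos (show m ≤ 2 * m by omega)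
    positivity
  have hcoeff := mul_lt_mul_of_pos_right (mul_add_one_lt_of_two_le (K := ℚ) (x := m)
    (by exact_mod_cast hm)) hpos
  refine ⟨by ring, by linear_combination hcoeff, by ring⟩
end

section
/- Moll's minimum conjecture in the b-form: for every integer m ≥ 2, the expression (m+i)(m+1−i) b_{i-1}(m)² + i(i+1) b_i(m)² − i(2m+1) b_{i-1}(m) b_i(m), for 1 ≤ i ≤ m, attains its minimum at i = m with value 2^{2m} m(m+1) C(2m,m)². -/
/-
With `x = b m (i - 1)` and `y = b m i`,
`E m i = i y² + ((m + 1 - i) x - i y) ((m + i) x - i y)`, and both factors are nonnegative because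
`i b m i ≤ (m + 1 - i) b m (i - 1)` holds termwise in the defining sums. Hence `E m i ≥ i (b m i)²`.
At `i = m` only the terms `k = m - 1, m` survive, which gives `E m m = m (m + 1) w²` with
`w = 2^m C(2m, m)`. For `1 ≤ i < m`, keeping the top terms of the sum for `b m i` already gives
`i (b m i)² ≥ m (m + 1) w²`.
-/

noncomputable def b (m i : ℕ) : ℚ :=
  ∑ k ∈ Finset.Icc i m,
    (2:ℚ)^k * (Nat.choose (2*m-2*k) (m-k)) * (Nat.choose (m+k) k) * (Nat.choose k i)

noncomputable def E (m i : ℕ) : ℚ :=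
  ((m:ℚ)+(i:ℚ))*((m:ℚ)+1-(i:ℚ)) * (b m (i-1))^2
    + (i:ℚ)*((i:ℚ)+1) * (b m i)^2
    - (i:ℚ)*(2*(m:ℚ)+1) * b m (i-1) * b m i

open Finset

theorem Nat.le_choose_of_pos_of_lt {n r : ℕ} (hr₀ : 0 < r) (hrn : r < n) : n ≤ n.choose r := by
  induction n generalizing r with
  | zero => omega
  | succ n ih =>
    obtain ⟨s, rfl⟩ : ∃ s, r = s + 1 := ⟨r - 1, by omega⟩
    rw [Nat.choose_succ_succ]
    rcases (show s + 1 ≤ n by omega).eq_or_lt with rfl | hs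
    · simp
    · have := ih (Nat.succ_pos s) hs
      have := Nat.choose_pos (show s ≤ n by omega)
      omega

def bWeight (m k : ℕ) : ℚ := 2 ^ k * (2 * m - 2 * k).choose (m - k) * (m + k).choose k

lemma b_eq_sum_bWeight (m i : ℕ) : b m i = ∑ k ∈ Icc i m, bWeight m k * k.choose i := rfl

lemma bWeight_nonneg (m k : ℕ) : 0 ≤ bWeight m k := by
  unfold bWeight; positivity

lemma bWeight_self (m : ℕ) : bWeight m m = 2 ^ m * (2 * m).choose m := by
  simp [bWeight, two_mul]

lemma two_mul_bWeight_pred (n : ℕ) : 2 * bWeight (n + 1) n = bWeight (n + 1) (n + 1) := by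
  have hcentral : (2 * (n + 1)).choose (n + 1) = 2 * (2 * n + 1).choose n := by
    rw [show 2 * (n + 1) = 2 * n + 1 + 1 by ring, Nat.choose_succ_succ, Nat.choose_symm_half]
    ring
  rw [bWeight_self, hcentral, bWeight, show 2 * (n + 1) - 2 * n = 2 by omega,
    show n + 1 - n = 1 by omega, show n + 1 + n = 2 * n + 1 by ring, Nat.choose_one_right]
  push_cast
  ring

lemma b_nonneg (m i : ℕ) : 0 ≤ b m i :=
  sum_nonneg fun k _ => mul_nonneg (bWeight_nonneg m k) (Nat.cast_nonneg _)

lemma b_self (m : ℕ) : b m m = bWeight m m := by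
  simp [b_eq_sum_bWeight]

lemma b_succ_eq (n i : ℕ) (hi : i ≤ n + 1) :
    b (n + 1) i = ∑ k ∈ Icc i n, bWeight (n + 1) k * k.choose i
      + bWeight (n + 1) (n + 1) * (n + 1).choose i :=
  sum_Icc_succ_top hi _

lemma b_succ_self_pred (n : ℕ) : b (n + 1) n = (2 * n + 3) / 2 * bWeight (n + 1) (n + 1) := by
  rw [b_succ_eq n n (by omega), Icc_self, sum_singleton, ← two_mul_bWeight_pred]
  simp only [Nat.choose_self, Nat.cast_one, mul_one, Nat.choose_succ_self_right, Nat.cast_add]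
  ring

lemma choose_mul_bWeight_self_le_b (m i : ℕ) (hi : i ≤ m) :
    m.choose i * bWeight m m ≤ b m i := by
  rw [mul_comm]
  exact single_le_sum (f := fun k => bWeight m k * k.choose i)
    (fun k _ => mul_nonneg (bWeight_nonneg m k) (Nat.cast_nonneg _)) (by simp [hi])

lemma three_mul_add_two_mul_bWeight_le_b_one (n : ℕ) (hn : 1 ≤ n) :
    (3 * n + 2) / 2 * bWeight (n + 1) (n + 1) ≤ b (n + 1) 1 := by
  rw [b_succ_eq n 1 (by omega)]
  have hpred : bWeight (n + 1) n * n.choose 1 ≤ ∑ k ∈ Icc 1 n, bWeight (n + 1) k * k.choose 1 :=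
    single_le_sum (f := fun k => bWeight (n + 1) k * k.choose 1)
      (fun k _ => mul_nonneg (bWeight_nonneg _ k) (Nat.cast_nonneg _)) (by simp [hn])
  rw [← two_mul_bWeight_pred]
  push_cast [Nat.choose_one_right] at hpred ⊢
  linarith

-- Termwise, `i C(k, i) = (k + 1 - i) C(k, i - 1) ≤ (m + 1 - i) C(k, i - 1)` for `k ≤ m`.
lemma mul_b_le_mul_b_pred (m i : ℕ) (hi₁ : 1 ≤ i) (hi : i ≤ m) :
    (i : ℚ) * b m i ≤ ((m : ℚ) + 1 - i) * b m (i - 1) := by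
  obtain ⟨j, rfl⟩ : ∃ j, i = j + 1 := ⟨i - 1, by omega⟩
  have hjm : (j : ℚ) + 1 ≤ m := by exact_mod_cast hi
  simp only [b_eq_sum_bWeight, mul_sum, Nat.add_sub_cancel]
  push_cast
  have hterm : ∀ k ∈ Icc (j + 1) m, ((j : ℚ) + 1) * (bWeight m k * k.choose (j + 1))
      ≤ ((m : ℚ) + 1 - (j + 1)) * (bWeight m k * k.choose j) := by
    intro k hk
    have hkm : (k : ℚ) ≤ m := by exact_mod_cast (mem_Icc.mp hk).2
    have hpascal : (k.choose (j + 1) : ℚ) * (j + 1) = k.choose j * ((k : ℚ) - j) := by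
      rw [← Nat.cast_sub (by grind)]
      exact_mod_cast Nat.choose_succ_right_eq k j
    have hw := bWeight_nonneg m k
    have hc : (0 : ℚ) ≤ k.choose j := Nat.cast_nonneg _
    nlinarith [mul_le_mul_of_nonneg_left (mul_le_mul_of_nonneg_left hkm hc) hw]
  refine (sum_le_sum hterm).trans (sum_le_sum_of_subset_of_nonneg
    (Icc_subset_Icc_left (Nat.le_succ j)) fun k _ _ => ?_)
  exact mul_nonneg (by linarith) (mul_nonneg (bWeight_nonneg m k) (Nat.cast_nonneg _))

lemma mul_b_sq_le_E (m i : ℕ) (hi₁ : 1 ≤ i) (hi : i ≤ m) : (i : ℚ) * b m i ^ 2 ≤ E m i := by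
  set x := b m (i - 1)
  set y := b m i
  have hratio : (i : ℚ) * y ≤ ((m : ℚ) + 1 - i) * x := mul_b_le_mul_b_pred m i hi₁ hi
  have hx : 0 ≤ x := b_nonneg m (i - 1)
  have hi₁' : (1 : ℚ) ≤ i := by exact_mod_cast hi₁
  have hfactor : E m i = i * y ^ 2 + ((m + 1 - i) * x - i * y) * ((m + i) * x - i * y) := by
    unfold E; ring
  rw [hfactor]
  have h₁ : 0 ≤ ((m : ℚ) + 1 - i) * x - i * y := by linarith
  have h₂ : 0 ≤ ((m : ℚ) + i) * x - i * y := by nlinarith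
  nlinarith [mul_nonneg h₁ h₂]

lemma E_succ_self (n : ℕ) :
    E (n + 1) (n + 1) = ((n : ℚ) + 1) * (n + 2) * bWeight (n + 1) (n + 1) ^ 2 := by
  unfold E
  rw [Nat.add_sub_cancel, b_self, b_succ_self_pred]
  push_cast
  ring

lemma E_succ_self_le_mul_b_sq (n j : ℕ) (hj : j < n) :
    ((n : ℚ) + 1) * (n + 2) * bWeight (n + 1) (n + 1) ^ 2 ≤ (j + 1) * b (n + 1) (j + 1) ^ 2 := by
  set w := bWeight (n + 1) (n + 1)
  have hw : 0 ≤ w := bWeight_nonneg _ _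
  have hn : (1 : ℚ) ≤ n := by exact_mod_cast (show 1 ≤ n by omega)
  rcases Nat.eq_zero_or_pos j with rfl | hj₀
  -- For `j = 0` the top term `(n + 1) w` of `b (n + 1) 1` is too small; the `k = n` term is needed.
  · have hb := three_mul_add_two_mul_bWeight_le_b_one n (by omega)
    have hsq := pow_le_pow_left₀ (by positivity) hb 2
    nlinarith [mul_nonneg (by nlinarith : (0 : ℚ) ≤ 5 * n ^ 2 - 4) (sq_nonneg w)]
  · have hchoose : (n : ℚ) + 1 ≤ (n + 1).choose (j + 1) := by
      exact_mod_cast Nat.le_choose_of_pos_of_lt (Nat.succ_pos j) (by omega)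
    have hb := (mul_le_mul_of_nonneg_right hchoose hw).trans
      (choose_mul_bWeight_self_le_b (n + 1) (j + 1) (by omega))
    have hsq := pow_le_pow_left₀ (by positivity) hb 2
    have hj' : (1 : ℚ) ≤ j := by exact_mod_cast hj₀
    nlinarith [mul_nonneg (by linarith : (0 : ℚ) ≤ (j : ℚ) - 1) (sq_nonneg (b (n + 1) (j + 1))),
      mul_nonneg (by linarith : (0 : ℚ) ≤ n) (sq_nonneg w)]

theorem stmt16_general (m : ℕ) :
    (∀ i : ℕ, 1 ≤ i → i ≤ m → E m m ≤ E m i)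
    ∧ E m m = (2:ℚ)^(2*m) * m * (m+1) * (Nat.choose (2*m) m : ℚ)^2 := by
  rcases m with _ | n
  · exact ⟨fun i hi₁ hi => by omega, by simp [E]⟩
  refine ⟨fun i hi₁ hi => ?_, ?_⟩
  · rcases hi.eq_or_lt with rfl | hlt
    · exact le_rfl
    obtain ⟨j, rfl⟩ : ∃ j, i = j + 1 := ⟨i - 1, by omega⟩
    calc E (n + 1) (n + 1) = ((n : ℚ) + 1) * (n + 2) * bWeight (n + 1) (n + 1) ^ 2 := E_succ_self n
      _ ≤ (j + 1) * b (n + 1) (j + 1) ^ 2 := E_succ_self_le_mul_b_sq n j (by omega)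
      _ ≤ E (n + 1) (j + 1) := by exact_mod_cast mul_b_sq_le_E (n + 1) (j + 1) hi₁ hi
  · rw [E_succ_self, bWeight_self]
    push_cast
    ring

theorem stmt16 (m : ℕ) (hm : 2 ≤ m) :
    (∀ i : ℕ, 1 ≤ i → i ≤ m → E m m ≤ E m i)
    ∧ E m m = (2:ℚ)^(2*m) * m * (m+1) * (Nat.choose (2*m) m : ℚ)^2 :=
  stmt16_general m
end
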